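/- Let F ∈ L¹(ℝ²) have compact support, and let k > 0 and x ∈ ℝ². Then lim_{N→∞} (2π)^{−2} ∫_{ℝ²} e^{i x·ξ} e^{−i(ξ₁²−ξ₂²)/k} e^{−|ξ|²/(4N²)} F̂(ξ) dξ = (k/(4π)) ∫_{ℝ²} e^{i(k/4)((z₁−x₁)²−(z₂−x₂)²)} F(z) dz. -/

import Mathlib

open MeasureTheory Real Filter
open scoped ENNReal

noncomputable section

/-- Fourier transform with the convention `f̂ ξ = ∫ f z e^{-i z·ξ} dz`. -/
def FT (f : ℝ × ℝ → ℂ) (ξ : ℝ × ℝ) : ℂ :=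
  ∫ z : ℝ × ℝ, Complex.exp (-(Complex.I * ((z.1 * ξ.1 + z.2 * ξ.2 : ℝ) : ℂ))) * f z

/-- The Bukhgeim phase `φ_{k,x}(z) = (k/4)((z₁-x₁)² - (z₂-x₂)²)`. -/
def phase (k : ℝ) (x z : ℝ × ℝ) : ℝ :=
  k / 4 * ((z.1 - x.1) ^ 2 - (z.2 - x.2) ^ 2)

/-- Squared weighted (homogeneous Sobolev-type) norm `∫ |ξ|^{2s} |g ξ|² dξ`
on the Fourier side. -/
def wNormSq (s : ℝ) (g : ℝ × ℝ → ℂ) : ℝ≥0∞ :=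
  ∫⁻ ξ : ℝ × ℝ, ENNReal.ofReal ((ξ.1 ^ 2 + ξ.2 ^ 2) ^ s) * (‖g ξ‖₊ : ℝ≥0∞) ^ 2

/-- Squared inhomogeneous Sobolev norm `∫ (1+|ξ|²)^s |g ξ|² dξ` on the Fourier side. -/
def sobNormSq (s : ℝ) (g : ℝ × ℝ → ℂ) : ℝ≥0∞ :=
  ∫⁻ ξ : ℝ × ℝ, ENNReal.ofReal ((1 + ξ.1 ^ 2 + ξ.2 ^ 2) ^ s) * (‖g ξ‖₊ : ℝ≥0∞) ^ 2

/-- `Fhat` is the Fourier transform of the (square-integrable) function `F`, in the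
distributional sense given by the multiplication formula against Schwartz functions. -/
def IsFT (F Fhat : ℝ × ℝ → ℂ) : Prop :=
  ∀ ψ : SchwartzMap (ℝ × ℝ) ℂ,
    ∫ z : ℝ × ℝ, F z * FT (fun w => ψ w) z = ∫ ξ : ℝ × ℝ, Fhat ξ * ψ ξ

/-- The modulation operator `M^{εk}F = χ_Q e^{iε φ_{k,x}} F`. -/
def Mop (Q : Set (ℝ × ℝ)) (ε k : ℝ) (x : ℝ × ℝ) (F : ℝ × ℝ → ℂ) : ℝ × ℝ → ℂ :=
  Q.indicator fun z => Complex.exp (Complex.I * ((ε * phase k x z : ℝ) : ℂ)) * F z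

/-- The Cauchy transform `∂_z^{-1} g (z) = (1/π) ∫ g(w) / ((z₁-w₁) - i(z₂-w₂)) dw`. -/
def CauchyZ (g : ℝ × ℝ → ℂ) (z : ℝ × ℝ) : ℂ :=
  (Real.pi : ℂ)⁻¹ *
    ∫ w : ℝ × ℝ, g w / (((z.1 - w.1 : ℝ) : ℂ) - Complex.I * ((z.2 - w.2 : ℝ) : ℂ))

/-- Euclidean ball in `ℝ × ℝ`. -/
def EBall (x : ℝ × ℝ) (r : ℝ) : Set (ℝ × ℝ) :=
  {y | (y.1 - x.1) ^ 2 + (y.2 - x.2) ^ 2 < r ^ 2}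

/-- The Bukhgeim main term `T^k_1[V](x) = (k/(4π)) ∫ e^{iφ_{k,x}(z)} V(z) dz`. -/
def TT (V : ℝ × ℝ → ℂ) (k : ℝ) (x : ℝ × ℝ) : ℂ :=
  ((k / (4 * Real.pi) : ℝ) : ℂ) *
    ∫ z : ℝ × ℝ, Complex.exp (Complex.I * ((phase k x z : ℝ) : ℂ)) * V z


/-!
Write the regularised symbol as `e^{i x·ξ} e^{-b ξ₁²} e^{-b̄ ξ₂²}` with `b = 1/(4N²) + i/k`.
The multiplication formula `∫ m F̂ = ∫ m̂ F` turns the left-hand side into `∫ K_N(x - z) F(z) dz`,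
where `K_N` is a product of two one-dimensional complex Gaussian Fourier integrals
`(π/b)^{1/2} e^{-t²/(4b)}`. As `N → ∞`, `b → i/k` and `K_N(t)` tends to `πk e^{i(k/4)(t₁² - t₂²)}`;
since `|b| ≥ 1/k`, `|K_N| ≤ πk` uniformly, so dominated convergence gives the limit.
-/

open Complex in
def gaussianFT (b : ℂ) (t : ℝ) : ℂ :=
  (π / b) ^ (1 / 2 : ℂ) * cexp (-t ^ 2 / (4 * b))

section Gaussian

open Complex ComplexConjugate

variable {b : ℂ}

theorem integrable_cexp_mul_gaussian (hb : 0 < b.re) (t : ℝ) :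
    Integrable fun u : ℝ => cexp (I * t * u) * cexp (-b * u ^ 2) := by
  simpa [← Complex.exp_add, add_comm] using integrable_cexp_quadratic hb (I * t) 0

theorem integral_cexp_mul_gaussian_prod {b₁ b₂ : ℂ} (hb₁ : 0 < b₁.re) (hb₂ : 0 < b₂.re)
    (t : ℝ × ℝ) :
    ∫ ξ : ℝ × ℝ, (cexp (I * t.1 * ξ.1) * cexp (-b₁ * ξ.1 ^ 2)) *
      (cexp (I * t.2 * ξ.2) * cexp (-b₂ * ξ.2 ^ 2)) = gaussianFT b₁ t.1 * gaussianFT b₂ t.2 := by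
  rw [Measure.volume_eq_prod,
    integral_prod_mul (fun u : ℝ => cexp (I * t.1 * u) * cexp (-b₁ * u ^ 2))
      (fun u : ℝ => cexp (I * t.2 * u) * cexp (-b₂ * u ^ 2)),
    fourierIntegral_gaussian hb₁, fourierIntegral_gaussian hb₂, gaussianFT, gaussianFT]

theorem integrable_cexp_mul_gaussian_prod {b₁ b₂ : ℂ} (hb₁ : 0 < b₁.re) (hb₂ : 0 < b₂.re)
    (t : ℝ × ℝ) :
    Integrable fun ξ : ℝ × ℝ => (cexp (I * t.1 * ξ.1) * cexp (-b₁ * ξ.1 ^ 2)) *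
      (cexp (I * t.2 * ξ.2) * cexp (-b₂ * ξ.2 ^ 2)) := by
  rw [Measure.volume_eq_prod]
  exact (integrable_cexp_mul_gaussian hb₁ t.1).mul_prod (integrable_cexp_mul_gaussian hb₂ t.2)

theorem continuous_gaussianFT (b : ℂ) : Continuous (gaussianFT b) := by
  unfold gaussianFT; fun_prop

theorem norm_gaussianFT_le (hb : 0 ≤ b.re) (t : ℝ) : ‖gaussianFT b t‖ ≤ √(π / ‖b‖) := by
  have hexp : ‖cexp (-t ^ 2 / (4 * b))‖ ≤ 1 := by
    rw [norm_exp, Real.exp_le_one_iff,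
      show -(t : ℂ) ^ 2 / (4 * b) = ((-t ^ 2 / 4 : ℝ) : ℂ) * b⁻¹ by push_cast; ring,
      re_ofReal_mul, inv_re]
    exact mul_nonpos_of_nonpos_of_nonneg (by nlinarith) (div_nonneg hb (normSq_nonneg b))
  have hpow : ‖(π / b : ℂ) ^ (1 / 2 : ℂ)‖ = √(π / ‖b‖) := by
    rw [show (1 / 2 : ℂ) = ((1 / 2 : ℝ) : ℂ) by norm_num, norm_cpow_real, norm_div, norm_real,
      Real.norm_of_nonneg Real.pi_pos.le, Real.sqrt_eq_rpow]
  rw [gaussianFT, norm_mul, hpow]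
  exact mul_le_of_le_one_right (Real.sqrt_nonneg _) hexp

theorem cpow_half_mul_conj_cpow_half {w : ℂ} (hw : w.im ≠ 0) :
    w ^ (1 / 2 : ℂ) * conj w ^ (1 / 2 : ℂ) = ‖w‖ := by
  have harg : w.arg ≠ π := fun h => hw (arg_eq_pi_iff.mp h).2
  rw [conj_cpow w _ harg, map_div₀, map_one, conj_ofNat, mul_conj, normSq_eq_norm_sq,
    show (1 / 2 : ℂ) = ((1 / 2 : ℝ) : ℂ) by norm_num, norm_cpow_real,
    ← Real.rpow_natCast, ← Real.rpow_mul (norm_nonneg w)]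
  norm_num

theorem gaussianFT_mul_gaussianFT_conj (hb : b.im ≠ 0) (t₁ t₂ : ℝ) :
    gaussianFT b t₁ * gaussianFT (conj b) t₂ =
      ‖π / b‖ * cexp (-t₁ ^ 2 / (4 * b) - t₂ ^ 2 / (4 * conj b)) := by
  have him : (π / b : ℂ).im ≠ 0 := by
    have hb0 : b ≠ 0 := fun h => hb (by simp [h])
    rw [div_eq_mul_inv, im_ofReal_mul, inv_im]
    exact mul_ne_zero Real.pi_ne_zero (div_ne_zero (neg_ne_zero.2 hb) (normSq_pos.2 hb0).ne')
  rw [gaussianFT, gaussianFT, mul_mul_mul_comm, show (π / conj b : ℂ) = conj (π / b) by simp,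
    cpow_half_mul_conj_cpow_half him, ← Complex.exp_add]
  ring_nf

end Gaussian

section Multiplication

open Complex

theorem integral_mul_FT_eq_integral_FT_mul {c F : ℝ × ℝ → ℂ} (hc : Integrable c)
    (hF : Integrable F) : ∫ ξ, c ξ * FT F ξ = ∫ z, FT c z * F z := by
  have hcont : Continuous fun p : (ℝ × ℝ) × (ℝ × ℝ) =>
      cexp (-(I * ((p.2.1 * p.1.1 + p.2.2 * p.1.2 : ℝ) : ℂ))) := by fun_prop
  have hint : Integrable (fun p : (ℝ × ℝ) × (ℝ × ℝ) =>
      c p.1 * (cexp (-(I * ((p.2.1 * p.1.1 + p.2.2 * p.1.2 : ℝ) : ℂ))) * F p.2))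
      (volume.prod volume) := by
    refine (hc.norm.mul_prod hF.norm).mono' ?_ (Eventually.of_forall fun p => ?_)
    · exact hc.aestronglyMeasurable.comp_fst.mul
        (hcont.aestronglyMeasurable.mul hF.aestronglyMeasurable.comp_snd)
    · simp only [norm_mul, ← mul_neg, ← ofReal_neg, norm_exp_I_mul_ofReal, one_mul, le_refl]
  calc ∫ ξ, c ξ * FT F ξ
      = ∫ ξ, ∫ z, c ξ * (cexp (-(I * ((z.1 * ξ.1 + z.2 * ξ.2 : ℝ) : ℂ))) * F z) := by
        simp only [FT, integral_const_mul]
    _ = ∫ z, ∫ ξ, c ξ * (cexp (-(I * ((z.1 * ξ.1 + z.2 * ξ.2 : ℝ) : ℂ))) * F z) :=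
        integral_integral_swap hint
    _ = ∫ z, FT c z * F z := by
      congr 1 with z
      rw [FT, ← integral_mul_const]
      congr 1 with ξ
      ring_nf

end Multiplication

section RegularizedSymbol

open Complex ComplexConjugate

def regularizedSymbol (k N : ℝ) (x ξ : ℝ × ℝ) : ℂ :=
  cexp (I * ((x.1 * ξ.1 + x.2 * ξ.2 : ℝ) : ℂ)) *
    cexp (-(I * (((ξ.1 ^ 2 - ξ.2 ^ 2) / k : ℝ) : ℂ))) *
    cexp (-((((ξ.1 ^ 2 + ξ.2 ^ 2) / (4 * N ^ 2) : ℝ)) : ℂ))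

def gaussCoeff (k N : ℝ) : ℂ := ((4 * N ^ 2)⁻¹ : ℝ) + I / k

variable {k N : ℝ}

@[simp] theorem gaussCoeff_re : (gaussCoeff k N).re = (4 * N ^ 2)⁻¹ := by
  rw [gaussCoeff, add_re, ofReal_re]; simp

@[simp] theorem gaussCoeff_im : (gaussCoeff k N).im = k⁻¹ := by
  rw [gaussCoeff, add_im, ofReal_im]; simp

theorem gaussCoeff_re_pos (hN : N ≠ 0) : 0 < (gaussCoeff k N).re := by
  rw [gaussCoeff_re]; positivity

theorem gaussCoeff_re_nonneg : 0 ≤ (gaussCoeff k N).re := by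
  rw [gaussCoeff_re]; positivity

theorem regularizedSymbol_eq (x ξ : ℝ × ℝ) :
    regularizedSymbol k N x ξ =
      (cexp (I * x.1 * ξ.1) * cexp (-gaussCoeff k N * ξ.1 ^ 2)) *
        (cexp (I * x.2 * ξ.2) * cexp (-conj (gaussCoeff k N) * ξ.2 ^ 2)) := by
  simp only [regularizedSymbol, gaussCoeff, ← Complex.exp_add, map_add, map_div₀, conj_ofReal,
    conj_I]
  push_cast
  ring_nf

theorem cexp_mul_regularizedSymbol (x z ξ : ℝ × ℝ) :
    cexp (-(I * ((ξ.1 * z.1 + ξ.2 * z.2 : ℝ) : ℂ))) * regularizedSymbol k N x ξ =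
      regularizedSymbol k N (x - z) ξ := by
  simp only [regularizedSymbol, ← Complex.exp_add, Prod.fst_sub, Prod.snd_sub]
  push_cast
  ring_nf

theorem integrable_regularizedSymbol (hN : N ≠ 0) (x : ℝ × ℝ) :
    Integrable (regularizedSymbol k N x) := by
  refine (integrable_cexp_mul_gaussian_prod (gaussCoeff_re_pos hN)
    (by rw [conj_re]; exact gaussCoeff_re_pos hN) x).congr
    (Eventually.of_forall fun ξ => (regularizedSymbol_eq x ξ).symm)

theorem FT_regularizedSymbol (hN : N ≠ 0) (x z : ℝ × ℝ) :
    FT (regularizedSymbol k N x) z =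
      gaussianFT (gaussCoeff k N) (x.1 - z.1) * gaussianFT (conj (gaussCoeff k N)) (x.2 - z.2) := by
  simp_rw [FT, cexp_mul_regularizedSymbol, regularizedSymbol_eq]
  exact integral_cexp_mul_gaussian_prod (gaussCoeff_re_pos hN)
    (by rw [conj_re]; exact gaussCoeff_re_pos hN) (x - z)

theorem integral_regularizedSymbol_mul_FT (hN : N ≠ 0) (x : ℝ × ℝ) {F : ℝ × ℝ → ℂ}
    (hF : Integrable F) :
    ∫ ξ, regularizedSymbol k N x ξ * FT F ξ =
      ∫ z, gaussianFT (gaussCoeff k N) (x.1 - z.1) *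
        gaussianFT (conj (gaussCoeff k N)) (x.2 - z.2) * F z := by
  simp_rw [integral_mul_FT_eq_integral_FT_mul (integrable_regularizedSymbol hN x) hF,
    FT_regularizedSymbol hN]

end RegularizedSymbol

section Limit

open Complex ComplexConjugate Topology

variable {k : ℝ}

theorem tendsto_gaussCoeff : Tendsto (gaussCoeff k) atTop (𝓝 (I / k)) := by
  have h : Tendsto (fun N : ℝ => (4 * N ^ 2)⁻¹) atTop (𝓝 0) :=
    tendsto_inv_atTop_zero.comp ((tendsto_pow_atTop two_ne_zero).const_mul_atTop four_pos)
  have h' := ((continuous_ofReal.tendsto 0).comp h).add_const (I / k)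
  rwa [ofReal_zero, zero_add] at h'

theorem tendsto_gaussianFT_mul_conj (hk : 0 < k) (t₁ t₂ : ℝ) :
    Tendsto (fun N => gaussianFT (gaussCoeff k N) t₁ * gaussianFT (conj (gaussCoeff k N)) t₂)
      atTop (𝓝 (((π * k : ℝ) : ℂ) * cexp (I * ((k / 4 * (t₁ ^ 2 - t₂ ^ 2) : ℝ) : ℂ)))) := by
  have hIk : I / k ≠ 0 := div_ne_zero I_ne_zero (ofReal_ne_zero.2 hk.ne')
  have hcont : ContinuousAt (fun b : ℂ =>
      (‖π / b‖ : ℂ) * cexp (-t₁ ^ 2 / (4 * b) - t₂ ^ 2 / (4 * conj b))) (I / k) := by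
    fun_prop (disch := simpa using hIk)
  have hval : (‖π / (I / k)‖ : ℂ) * cexp (-t₁ ^ 2 / (4 * (I / k)) - t₂ ^ 2 / (4 * conj (I / k))) =
      ((π * k : ℝ) : ℂ) * cexp (I * ((k / 4 * (t₁ ^ 2 - t₂ ^ 2) : ℝ) : ℂ)) := by
    have hnorm : ‖(π : ℂ) / (I / k)‖ = π * k := by
      rw [norm_div, norm_div, norm_I, norm_real, norm_real, Real.norm_of_nonneg Real.pi_pos.le,
        Real.norm_of_nonneg hk.le, one_div, div_inv_eq_mul]
    rw [hnorm, map_div₀, conj_I, conj_ofReal]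
    congr 2
    field_simp
    push_cast
    linear_combination (k * t₂ ^ 2 - k * t₁ ^ 2 : ℂ) * I_sq
  refine (hval ▸ hcont.tendsto.comp tendsto_gaussCoeff).congr fun N => ?_
  exact (gaussianFT_mul_gaussianFT_conj (by rw [gaussCoeff_im]; exact inv_ne_zero hk.ne')
    t₁ t₂).symm

theorem tendsto_integral_gaussianFT_mul (hk : 0 < k) {F : ℝ × ℝ → ℂ} (hF : Integrable F)
    (x : ℝ × ℝ) :
    Tendsto (fun N => ∫ z, gaussianFT (gaussCoeff k N) (x.1 - z.1) *
        gaussianFT (conj (gaussCoeff k N)) (x.2 - z.2) * F z) atTop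
      (𝓝 (∫ z, ((π * k : ℝ) : ℂ) * (cexp (I * (phase k x z : ℂ)) * F z))) := by
  set C := √(π / k⁻¹)
  have hbound : ∀ b : ℂ, 0 ≤ b.re → k⁻¹ ≤ ‖b‖ → ∀ t, ‖gaussianFT b t‖ ≤ C := fun b hb hkb t =>
    (norm_gaussianFT_le hb t).trans <| Real.sqrt_le_sqrt <|
      div_le_div_of_nonneg_left Real.pi_pos.le (inv_pos.2 hk) hkb
  have hnorm : ∀ N, k⁻¹ ≤ ‖gaussCoeff k N‖ := fun N => by
    simpa [abs_of_pos hk] using abs_im_le_norm (gaussCoeff k N)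
  refine tendsto_integral_filter_of_dominated_convergence (fun z => C * C * ‖F z‖)
    (Eventually.of_forall fun N => ?_) (Eventually.of_forall fun N => ?_)
    (hF.norm.const_mul _) (Eventually.of_forall fun z => ?_)
  · exact (((continuous_gaussianFT _).comp (by fun_prop)).mul
      ((continuous_gaussianFT _).comp (by fun_prop))).aestronglyMeasurable.mul
      hF.aestronglyMeasurable
  · refine Eventually.of_forall fun z => ?_
    rw [norm_mul, norm_mul]
    gcongr
    · exact hbound _ gaussCoeff_re_nonneg (hnorm N) _
    · exact hbound _ (by rw [conj_re]; exact gaussCoeff_re_nonneg)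
        (by rw [norm_conj]; exact hnorm N) _
  · have hphase : phase k x z = k / 4 * ((x.1 - z.1) ^ 2 - (x.2 - z.2) ^ 2) := by
      unfold phase; ring
    rw [hphase, ← mul_assoc]
    exact (tendsto_gaussianFT_mul_conj hk _ _).mul_const (F z)

end Limit

theorem stmt13_general (F : ℝ × ℝ → ℂ) (hF : Integrable F volume)
    (k : ℝ) (hk : 0 < k) (x : ℝ × ℝ) :
    Filter.Tendsto (fun N : ℝ =>
        (2 * Real.pi : ℂ) ^ (-2 : ℤ) *
          ∫ ξ : ℝ × ℝ,
            Complex.exp (Complex.I * ((x.1 * ξ.1 + x.2 * ξ.2 : ℝ) : ℂ)) *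
            Complex.exp (-(Complex.I * (((ξ.1 ^ 2 - ξ.2 ^ 2) / k : ℝ) : ℂ))) *
            Complex.exp (-((((ξ.1 ^ 2 + ξ.2 ^ 2) / (4 * N ^ 2) : ℝ)) : ℂ)) * FT F ξ)
      Filter.atTop
      (nhds (((k / (4 * Real.pi) : ℝ) : ℂ) *
        ∫ z : ℝ × ℝ, Complex.exp (Complex.I * ((phase k x z : ℝ) : ℂ)) * F z)) := by
  have hconst : (2 * π : ℂ) ^ (-2 : ℤ) * ((π * k : ℝ) : ℂ) = ((k / (4 * π) : ℝ) : ℂ) := by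
    have : (π : ℂ) ≠ 0 := Complex.ofReal_ne_zero.2 Real.pi_ne_zero
    push_cast
    field_simp
    ring
  have hlim := (tendsto_integral_gaussianFT_mul hk hF x).const_mul ((2 * π : ℂ) ^ (-2 : ℤ))
  rw [integral_const_mul, ← mul_assoc, hconst] at hlim
  refine hlim.congr' (eventually_ne_atTop 0 |>.mono fun N hN => ?_)
  exact congrArg _ (integral_regularizedSymbol_mul_FT hN x hF).symm

/-- the pointwise limit formula (pointlim) of Section 4. For
compactly supported `F ∈ L¹(ℝ²)`, `k > 0` and `x ∈ ℝ²`, the Gaussian-regularized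
nonelliptic Schrödinger evolutions converge to the Bukhgeim integral:
`lim_{N→∞} (2π)^{-2} ∫ e^{ix·ξ} e^{-i(ξ₁²-ξ₂²)/k} e^{-|ξ|²/(4N²)} F̂(ξ) dξ
  = (k/(4π)) ∫ e^{i(k/4)((z₁-x₁)²-(z₂-x₂)²)} F(z) dz`. -/
theorem stmt13 (F : ℝ × ℝ → ℂ) (hF : Integrable F volume) (hsupp : HasCompactSupport F)
    (k : ℝ) (hk : 0 < k) (x : ℝ × ℝ) :
    Filter.Tendsto (fun N : ℝ =>
        (2 * Real.pi : ℂ) ^ (-2 : ℤ) *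
          ∫ ξ : ℝ × ℝ,
            Complex.exp (Complex.I * ((x.1 * ξ.1 + x.2 * ξ.2 : ℝ) : ℂ)) *
            Complex.exp (-(Complex.I * (((ξ.1 ^ 2 - ξ.2 ^ 2) / k : ℝ) : ℂ))) *
            Complex.exp (-((((ξ.1 ^ 2 + ξ.2 ^ 2) / (4 * N ^ 2) : ℝ)) : ℂ)) * FT F ξ)
      Filter.atTop
      (nhds (((k / (4 * Real.pi) : ℝ) : ℂ) *
        ∫ z : ℝ × ℝ, Complex.exp (Complex.I * ((phase k x z : ℝ) : ℂ)) * F z)) :=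
  stmt13_general F hF k hk x
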